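/- arXiv:1010.0162 — 7 statements merged into one kernel-verified Lean document; each statement's English description precedes it below -/
import Mathlib

section
/- Let λ : {0,1}^n → ℝ be a function. Then ∑_{x ∈ {0,1}^n} λ(x) φ(x) = 0 for every nondecreasing function φ : {0,1}^n → {0,1} with φ(0,...,0) = 0 and φ(1,...,1) = 1, if and only if λ(x) = 0 for all x ≠ (0,...,0). -/
/-- Key lemma: `∑_x λ(x) φ(x) = 0` for every semicoherent structure function
`φ` (nondecreasing, `φ(0,…,0)=0`, `φ(1,…,1)=1`) iff `λ(x) = 0` for all `x ≠ 0`. -/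
theorem stmt_1 (n : ℕ) (hn : 2 ≤ n) (lam : (Fin n → Bool) → ℝ) :
    (∀ φ : (Fin n → Bool) → Bool,
        (∀ x y : Fin n → Bool, (∀ i, x i ≤ y i) → φ x ≤ φ y) →
        φ (fun _ => false) = false → φ (fun _ => true) = true →
        ∑ x : Fin n → Bool, lam x * (if φ x then (1 : ℝ) else 0) = 0) ↔
      (∀ x : Fin n → Bool, x ≠ (fun _ => false) → lam x = 0) := by
  have i0 : Fin n := ⟨0, by omega⟩
  constructor
  · intro h x hx
    by_cases hx1 : x = fun _ => true
    · subst hx1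
      have h1 := h (fun y => decide (∀ i, y i = true))
        (by
          intro a b hab
          by_cases ha : ∀ i, a i = true
          · have : ∀ i, b i = true := fun i => le_antisymm le_top ((ha i) ▸ hab i)
            simp [ha, this]
          · simp [ha])
        (by
          have : ¬ ∀ i : Fin n, (fun _ : Fin n => false) i = true :=
            fun hall => by simpa using hall i0
          simp only [decide_eq_false_iff_not]
          exact this)
        (by simp)
      rw [Finset.sum_eq_single (fun _ => true : Fin n → Bool)] at h1
      · simpa using h1
      · intro b _ hb
        have : ¬ ∀ i, b i = true := fun hall => hb (funext hall)
        simp [this]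
      · simp
    · -- x ≠ 0, x ≠ 1
      obtain ⟨j, hj⟩ : ∃ j, x j = true := by
        by_contra hc
        push_neg at hc
        exact hx (funext fun i => by simpa using hc i)
      have h1 := h (fun y => decide (∀ i, x i ≤ y i))
        (by
          intro a b hab
          by_cases hax : ∀ i, x i ≤ a i
          · have : ∀ i, x i ≤ b i := fun i => le_trans (hax i) (hab i)
            simp [hax, this]
          · simp [hax])
        (by
          have : ¬ ∀ i, x i ≤ (fun _ : Fin n => false) i := by
            intro hall
            have h' : (true : Bool) ≤ false := by simpa [hj] using hall j
            exact absurd h' (by decide)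
          simp [this])
        (by simp)
      have h2 := h (fun y => decide ((∀ i, x i ≤ y i) ∧ y ≠ x))
        (by
          intro a b hab
          by_cases hax : (∀ i, x i ≤ a i) ∧ a ≠ x
          · have hb1 : ∀ i, x i ≤ b i := fun i => le_trans (hax.1 i) (hab i)
            have hb2 : b ≠ x := by
              intro hbx
              apply hax.2
              apply funext
              intro i
              have h1 : a i ≤ x i := hbx ▸ hab i
              exact le_antisymm h1 (hax.1 i)
            simp [hb1, hb2]
          · simp [hax])
        (by
          have : ¬ ((∀ i, x i ≤ (fun _ : Fin n => false) i) ∧ (fun _ : Fin n => false) ≠ x) := by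
            rintro ⟨hall, -⟩
            have h' : (true : Bool) ≤ false := by simpa [hj] using hall j
            exact absurd h' (by decide)
          simp [this])
        (by
          have : (∀ i, x i ≤ (fun _ : Fin n => true) i) ∧ (fun _ : Fin n => true) ≠ x :=
            ⟨fun i => le_top, fun he => hx1 he.symm⟩
          simp [this])
      have key : lam x =
          (∑ y : Fin n → Bool, lam y * (if decide (∀ i, x i ≤ y i) then (1 : ℝ) else 0)) -
          (∑ y : Fin n → Bool, lam y * (if decide ((∀ i, x i ≤ y i) ∧ y ≠ x) then (1 : ℝ) else 0)) := by
        rw [← Finset.sum_sub_distrib]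
        rw [Finset.sum_eq_single x]
        · simp
        · intro b _ hb
          by_cases hbx : ∀ i, x i ≤ b i
          · simp [hbx, hb]
          · simp [hbx]
        · simp
      rw [key, h1, h2, sub_zero]
  · intro h φ hmono h0 h1
    apply Finset.sum_eq_zero
    intro y _
    by_cases hy : y = fun _ => false
    · subst hy
      simp [h0]
    · simp [h y hy]
end

section
/- Let w : {0,1}^n → ℝ and fix t > 0. Define φ^w_k = ∑_{|x|=k} w(x)φ(x) for k ∈ [n], φ^w_0 = 0. Then Pr(φ(χ(t))=1) = ∑_{k=1}^n (φ^w_{n−k+1} − φ^w_{n−k}) · Pr(X_{k:n} > t) holds for every nondecreasing φ : {0,1}^n → {0,1} with φ(0)=0, φ(1)=1, if and only if Pr(χ(t) = x) = w(x) · ∑_{|z|=|x|} Pr(χ(t) = z) for every x ≠ (0,...,0). -/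
/-
Write p(x) = Pr(χ(t) = x) and |x| for the number of ones of x. Both probabilities in the
decomposition are sums over the fibres of χ(t): Pr(φ(χ(t)) = 1) = ∑_{φ x = 1} p(x) and
Pr(X_{k:n} > t) = ∑_{|x| ≥ n+1-k} p(x). Summation by parts in k telescopes the differences
φ^w_{n-k+1} - φ^w_{n-k} into φ^w_{|x|}, so the right-hand side equals
∑_{φ z = 1} w(z) ∑_{|x| = |z|} p(x). The decomposition therefore holds for every semicoherent φ
iff d(x) = p(x) - w(x) ∑_{|z| = |x|} p(z) sums to zero over every up-set avoiding 0. Applied to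
the principal up-sets {y | a ≤ y}, this gives d(a) = 0 by downward induction on a ≠ 0.
-/

open MeasureTheory Finset
open scoped ProbabilityTheory

theorem toReal_measure_setOf_comp_eq_sum {Ω α : Type*} [MeasurableSpace Ω] {μ : Measure Ω}
    [IsFiniteMeasure μ] [Fintype α] [MeasurableSpace α] [MeasurableSingletonClass α]
    {f : Ω → α} (hf : Measurable f) (P : α → Prop) [DecidablePred P] :
    (μ {ω | P (f ω)}).toReal = ∑ x ∈ univ.filter P, (μ (f ⁻¹' {x})).toReal := by
  simpa [measureReal_def] using
    (sum_measureReal_preimage_singleton (μ := μ) (univ.filter P)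
      (fun y _ => hf (measurableSet_singleton y))).symm

theorem measurable_pi_decide_lt {Ω ι : Type*} [MeasurableSpace Ω] (X : ι → Ω → ℝ)
    (hX : ∀ i, Measurable (X i)) (t : ℝ) : Measurable fun ω i => decide (t < X i ω) :=
  measurable_pi_lambda _ fun i =>
    measurable_to_bool (by convert measurableSet_lt (measurable_const (a := t)) (hX i); ext; simp)

theorem sum_Icc_filter_sub_eq {G : Type*} [AddCommGroup G] (A : ℕ → G) {n j : ℕ} (hj : j ≤ n) :
    ∑ k ∈ (Icc 1 n).filter (fun k => n + 1 - k ≤ j), (A (n - k + 1) - A (n - k)) = A j - A 0 := by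
  rw [← sum_range_sub]
  refine sum_nbij' (fun k => n - k) (fun m => n - m) ?_ ?_ ?_ ?_ fun _ _ => rfl <;>
    intro a ha <;> simp only [mem_filter, mem_Icc, mem_range] at ha ⊢ <;> omega

theorem sum_Icc_sub_mul_sum_filter_le {R α : Type*} [CommRing R] [Fintype α] (A : ℕ → R)
    (c : α → ℕ) (g : α → R) {n : ℕ} (hc : ∀ x, c x ≤ n) :
    ∑ k ∈ Icc 1 n,
        (A (n - k + 1) - A (n - k)) * ∑ x ∈ univ.filter (fun x => n + 1 - k ≤ c x), g x
      = ∑ x, g x * (A (c x) - A 0) := by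
  simp_rw [mul_sum, sum_filter]
  rw [sum_comm]
  refine sum_congr rfl fun x _ => ?_
  rw [← sum_Icc_filter_sub_eq A (hc x), mul_sum, sum_filter]
  exact sum_congr rfl fun k _ => by split_ifs <;> ring

theorem sum_mul_sum_fiber_comm {R α β : Type*} [CommSemiring R] [Fintype α] [DecidableEq β]
    (c : α → β) (f g : α → R) :
    ∑ x, g x * ∑ z ∈ univ.filter (fun z => c z = c x), f z
      = ∑ z, f z * ∑ x ∈ univ.filter (fun x => c x = c z), g x := by
  simp_rw [mul_sum, sum_filter]
  rw [sum_comm]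
  refine sum_congr rfl fun z _ => sum_congr rfl fun x _ => ?_
  by_cases hzx : c z = c x
  · simp [hzx, mul_comm]
  · simp [hzx, Ne.symm hzx]

theorem sum_Icc_sub_mul_sum_filter_le_eq_sum_filter {R α : Type*} [CommRing R] [Fintype α]
    (c : α → ℕ) {n : ℕ} (hc : ∀ x, c x ≤ n) (w p : α → R) (φ : α → Bool)
    (hφ : ∀ x, c x = 0 → φ x = false) :
    ∑ k ∈ Icc 1 n,
        ((∑ x ∈ univ.filter (fun x => c x = n - k + 1), w x * if φ x then (1 : R) else 0) -
          (∑ x ∈ univ.filter (fun x => c x = n - k), w x * if φ x then (1 : R) else 0)) *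
        ∑ x ∈ univ.filter (fun x => n + 1 - k ≤ c x), p x
      = ∑ x ∈ univ.filter (fun x => φ x), w x * ∑ z ∈ univ.filter (fun z => c z = c x), p z := by
  set f : α → R := fun x => w x * if φ x then 1 else 0
  have hA0 : ∑ x ∈ univ.filter (fun x => c x = 0), f x = 0 :=
    sum_eq_zero fun x hx => by simp [f, hφ x (mem_filter.1 hx).2]
  rw [sum_Icc_sub_mul_sum_filter_le (fun j => ∑ x ∈ univ.filter (fun x => c x = j), f x) c p hc]
  simp only [hA0, sub_zero]
  rw [sum_mul_sum_fiber_comm, sum_filter]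
  exact sum_congr rfl fun x _ => by split_ifs <;> simp [f, *]

theorem eq_zero_of_forall_sum_filter_le_eq_zero {α M : Type*} [Fintype α] [PartialOrder α]
    [OrderBot α] [DecidableLE α] [AddCommGroup M] {d : α → M}
    (h : ∀ a ≠ ⊥, ∑ y ∈ univ.filter (a ≤ ·), d y = 0) (a : α) (ha : a ≠ ⊥) : d a = 0 := by
  classical
  induction a using WellFoundedGT.induction with
  | _ a ih =>
    have ha_mem : a ∈ univ.filter (a ≤ ·) := by simp
    have hgt : ∑ y ∈ (univ.filter (a ≤ ·)).erase a, d y = 0 := by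
      refine sum_eq_zero fun y hy => ?_
      have hlt : a < y :=
        lt_of_le_of_ne (mem_filter.1 (mem_of_mem_erase hy)).2 (ne_of_mem_erase hy).symm
      exact ih y hlt (ne_bot_of_gt hlt)
    simpa [← add_sum_erase _ _ ha_mem, hgt] using h a ha

theorem forall_monotone_sum_filter_eq_zero_iff {α M : Type*} [Fintype α] [PartialOrder α]
    [BoundedOrder α] [DecidableLE α] [AddCommGroup M] (d : α → M) :
    (∀ φ : α → Bool, Monotone φ → φ ⊥ = false → φ ⊤ = true →
      ∑ x ∈ univ.filter (fun x => φ x), d x = 0) ↔ ∀ a ≠ ⊥, d a = 0 := by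
  constructor
  · intro h
    refine eq_zero_of_forall_sum_filter_le_eq_zero fun a ha => ?_
    have hmono : Monotone fun y => decide (a ≤ y) := fun x y hxy =>
      Bool.le_iff_imp.2 (by simpa using fun hax : a ≤ x => hax.trans hxy)
    simpa using h _ hmono (by simpa using ha) (by simp)
  · intro h φ _ hφbot _
    refine sum_eq_zero fun x hx => h x ?_
    rintro rfl
    simp [hφbot] at hx

theorem stmt_6_general (n : ℕ)
    {Ω : Type*} [MeasureSpace Ω] [IsProbabilityMeasure (ℙ : Measure Ω)]
    (X : Fin n → Ω → ℝ) (hX : ∀ i, Measurable (X i))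
    (w : (Fin n → Bool) → ℝ) (t : ℝ) :
    (∀ φ : (Fin n → Bool) → Bool,
        (∀ x y : Fin n → Bool, (∀ i, x i ≤ y i) → φ x ≤ φ y) →
        φ (fun _ => false) = false → φ (fun _ => true) = true →
        (ℙ {ω | φ (fun i => decide (t < X i ω)) = true}).toReal =
          ∑ k ∈ Finset.Icc 1 n,
            ((∑ x ∈ Finset.univ.filter
                (fun x : Fin n → Bool =>
                  (Finset.univ.filter fun i => x i = true).card = n - k + 1),
                w x * (if φ x then (1 : ℝ) else 0)) -
             (∑ x ∈ Finset.univ.filter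
                (fun x : Fin n → Bool =>
                  (Finset.univ.filter fun i => x i = true).card = n - k),
                w x * (if φ x then (1 : ℝ) else 0))) *
            (ℙ {ω | n + 1 - k ≤ (Finset.univ.filter fun i => t < X i ω).card}).toReal) ↔
    (∀ x : Fin n → Bool, x ≠ (fun _ => false) →
        (ℙ {ω | (fun i => decide (t < X i ω)) = x}).toReal =
          w x * ∑ z ∈ Finset.univ.filter
              (fun z : Fin n → Bool =>
                (Finset.univ.filter fun i => z i = true).card =
                  (Finset.univ.filter fun i => x i = true).card),
            (ℙ {ω | (fun i => decide (t < X i ω)) = z}).toReal) := by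
  classical
  set c : (Fin n → Bool) → ℕ := fun x => (univ.filter fun i => x i = true).card
  set p : (Fin n → Bool) → ℝ := fun x => (ℙ {ω | (fun i => decide (t < X i ω)) = x}).toReal
  set S : (Fin n → Bool) → ℝ := fun x => ∑ z ∈ univ.filter (fun z => c z = c x), p z
  have hχ := measurable_pi_decide_lt X hX t
  have hc : ∀ x, c x ≤ n := fun x => (card_filter_le _ _).trans (by simp)
  have hc0 : ∀ x, c x = 0 → x = ⊥ := fun x hx => by
    simp only [c, card_eq_zero, filter_eq_empty_iff, mem_univ, true_implies,
      Bool.not_eq_true] at hx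
    exact funext hx
  have hreliability : ∀ φ : (Fin n → Bool) → Bool,
      (ℙ {ω | φ (fun i => decide (t < X i ω)) = true}).toReal
        = ∑ x ∈ univ.filter (fun x => φ x), p x :=
    fun φ => toReal_measure_setOf_comp_eq_sum hχ (fun x => φ x = true)
  have horder : ∀ k, (ℙ {ω | n + 1 - k ≤ (univ.filter fun i => t < X i ω).card}).toReal
      = ∑ x ∈ univ.filter (fun x => n + 1 - k ≤ c x), p x := fun k => by
    have hcount : ∀ ω, c (fun i => decide (t < X i ω)) = (univ.filter fun i => t < X i ω).card :=
      fun ω => by simp only [c, decide_eq_true_eq]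
    simp only [← hcount]
    exact toReal_measure_setOf_comp_eq_sum hχ (fun x => n + 1 - k ≤ c x)
  calc _ ↔ ∀ φ : (Fin n → Bool) → Bool, Monotone φ → φ ⊥ = false → φ ⊤ = true →
        ∑ x ∈ univ.filter (fun x => φ x), (p x - w x * S x) = 0 := by
        refine forall_congr' fun φ => imp_congr_right fun _ => forall_congr' fun hφ =>
          imp_congr_right fun _ => ?_
        rw [hreliability, sum_sub_distrib, sub_eq_zero]
        simp only [horder]
        rw [sum_Icc_sub_mul_sum_filter_le_eq_sum_filter c hc w p φ fun x hx => hc0 x hx ▸ hφ]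
    _ ↔ ∀ x ≠ ⊥, p x - w x * S x = 0 := forall_monotone_sum_filter_eq_zero_iff _
    _ ↔ _ := by simp only [sub_eq_zero]; rfl

/-- Weighted decomposition: for fixed `t > 0` and weight `w`, the reliability
`Pr(φ(χ(t)) = 1)` equals `∑_{k=1}^n (φ^w_{n-k+1} - φ^w_{n-k}) Pr(X_{k:n} > t)` for every
semicoherent structure function `φ` iff
`Pr(χ(t) = x) = w(x) ∑_{|z|=|x|} Pr(χ(t) = z)` for every `x ≠ 0`.
Here `φ^w_j = ∑_{|x|=j} w(x) φ(x)` (so `φ^w_0 = 0` since `φ(0) = 0`), and `(X_{k:n} > t)`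
is the event that at least `n - k + 1` of the `X_i` exceed `t`. -/
theorem stmt_6 (n : ℕ) (hn : 2 ≤ n)
    {Ω : Type*} [MeasureSpace Ω] [IsProbabilityMeasure (ℙ : Measure Ω)]
    (X : Fin n → Ω → ℝ) (hX : ∀ i, Measurable (X i))
    (w : (Fin n → Bool) → ℝ) (t : ℝ) (ht : 0 < t) :
    (∀ φ : (Fin n → Bool) → Bool,
        (∀ x y : Fin n → Bool, (∀ i, x i ≤ y i) → φ x ≤ φ y) →
        φ (fun _ => false) = false → φ (fun _ => true) = true →
        (ℙ {ω | φ (fun i => decide (t < X i ω)) = true}).toReal =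
          ∑ k ∈ Finset.Icc 1 n,
            ((∑ x ∈ Finset.univ.filter
                (fun x : Fin n → Bool =>
                  (Finset.univ.filter fun i => x i = true).card = n - k + 1),
                w x * (if φ x then (1 : ℝ) else 0)) -
             (∑ x ∈ Finset.univ.filter
                (fun x : Fin n → Bool =>
                  (Finset.univ.filter fun i => x i = true).card = n - k),
                w x * (if φ x then (1 : ℝ) else 0))) *
            (ℙ {ω | n + 1 - k ≤ (Finset.univ.filter fun i => t < X i ω).card}).toReal) ↔
    (∀ x : Fin n → Bool, x ≠ (fun _ => false) →
        (ℙ {ω | (fun i => decide (t < X i ω)) = x}).toReal =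
          w x * ∑ z ∈ Finset.univ.filter
              (fun z : Fin n → Bool =>
                (Finset.univ.filter fun i => z i = true).card =
                  (Finset.univ.filter fun i => x i = true).card),
            (ℙ {ω | (fun i => decide (t < X i ω)) = z}).toReal) :=
  stmt_6_general n X hX w t
end

section
/- Fix t > 0. The signature-based representation Pr(φ(χ(t))=1) = ∑_{k=1}^n (φ_{n−k+1} − φ_{n−k}) Pr(X_{k:n} > t), where φ_k = (1/C(n,k)) ∑_{|x|=k} φ(x) and φ_0 = 0, holds for every nondecreasing φ : {0,1}^n → {0,1} with φ(0)=0 and φ(1)=1, if and only if the indicator variables χ_1(t),...,χ_n(t) are exchangeable, i.e., Pr(χ(t) = x) = Pr(χ(t) = x') whenever |x| = |x'|. -/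
/-!
Write `p x = Pr(χ(t) = x)` and `p̄ x` for the average of `p` over the level `{y : |y| = |x|}`.
Abel summation turns the right-hand side into `∑ₓ φ(x) p̄(x)` (this uses `φ_0 = 0`), while the
left-hand side is `∑ₓ φ(x) p(x)`; so exchangeability, i.e. `p = p̄`, gives the representation.
Conversely, test the representation on the semicoherent `probe z`, which is `1` exactly at the
states above `z` and at the states with more than `|z|` working components: since `p` and `p̄`
have the same sum over every union of levels, what remains is `p z = p̄ z`.
-/

open Finset

section FiberMean

variable {α β : Type*} [Fintype α] [DecidableEq β]

noncomputable def fiberMean (f : α → β) (g : α → ℝ) (b : β) : ℝ :=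
  (#{x | f x = b} : ℝ)⁻¹ * ∑ x with f x = b, g x

theorem fiberMean_apply_eq_of_forall {f : α → β} {g : α → ℝ} {x : α} {c : ℝ}
    (h : ∀ y, f y = f x → g y = c) : fiberMean f g (f x) = c := by
  have hpos : (#{y | f y = f x} : ℝ) ≠ 0 := by
    exact_mod_cast (card_pos.mpr ⟨x, by simp⟩).ne'
  rw [fiberMean, sum_congr rfl fun y hy => h y (mem_filter.mp hy).2, sum_const, nsmul_eq_mul,
    inv_mul_cancel_left₀ hpos]

theorem sum_fiberMean_mul_comm (f : α → β) (g p : α → ℝ) :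
    ∑ x, fiberMean f g (f x) * p x = ∑ x, g x * fiberMean f p (f x) := by
  have hfib (h : α → ℝ) : ∑ x, h x = ∑ b ∈ univ.image f, ∑ x with f x = b, h x :=
    (sum_fiberwise_of_maps_to (fun x _ => mem_image_of_mem f (mem_univ x)) h).symm
  rw [hfib, hfib]
  refine sum_congr rfl fun b _ => ?_
  calc ∑ x with f x = b, fiberMean f g (f x) * p x
      = fiberMean f g b * ∑ x with f x = b, p x := by
        rw [mul_sum]; exact sum_congr rfl fun x hx => by rw [(mem_filter.mp hx).2]
    _ = (∑ x with f x = b, g x) * fiberMean f p b := by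
        simp only [fiberMean]; ring
    _ = ∑ x with f x = b, g x * fiberMean f p (f x) := by
        rw [sum_mul]; exact sum_congr rfl fun x hx => by rw [(mem_filter.mp hx).2]

theorem sum_filter_fiberMean (f : α → β) (p : α → ℝ) (P : β → Prop) [DecidablePred P] :
    ∑ x with P (f x), fiberMean f p (f x) = ∑ x with P (f x), p x := by
  have hind (x : α) : fiberMean f (fun y => if P (f y) then 1 else 0) (f x) =
      if P (f x) then 1 else 0 :=
    fiberMean_apply_eq_of_forall fun y hy => by rw [hy]
  have h := sum_fiberMean_mul_comm f (fun y => if P (f y) then 1 else 0) p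
  simp only [hind, boole_mul] at h
  rw [sum_filter, sum_filter, h]

end FiberMean

theorem sum_range_sub_mul_sum_filter_le {α : Type*} [Fintype α] (w : α → ℕ) {n : ℕ}
    (hw : ∀ x, w x ≤ n) (b : ℕ → ℝ) (p : α → ℝ) :
    ∑ i ∈ range n, (b (i + 1) - b i) * ∑ x with i + 1 ≤ w x, p x =
      ∑ x, (b (w x) - b 0) * p x := by
  simp_rw [mul_sum, sum_filter]
  rw [sum_comm]
  refine sum_congr rfl fun x _ => ?_
  have hrange : {i ∈ range n | i + 1 ≤ w x} = range (w x) := by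
    ext i; simp only [mem_filter, mem_range]; have := hw x; omega
  rw [← sum_range_sub b (w x), sum_mul, ← sum_filter, hrange]

section Weight

variable {ι : Type*} [Fintype ι]

def weight (x : ι → Bool) : ℕ := #{i | x i = true}

theorem weight_le_card (x : ι → Bool) : weight x ≤ Fintype.card ι :=
  card_filter_le _ _

theorem filter_eq_true_subset {x y : ι → Bool} (h : x ≤ y) :
    univ.filter (fun i => x i = true) ⊆ univ.filter (fun i => y i = true) := by
  intro i
  simpa only [mem_filter, mem_univ, true_and] using Bool.le_iff_imp.mp (h i)

theorem weight_mono : Monotone (weight : (ι → Bool) → ℕ) :=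
  fun _ _ h => card_le_card (filter_eq_true_subset h)

theorem eq_of_le_of_weight_le {x y : ι → Bool} (h : x ≤ y) (hw : weight y ≤ weight x) :
    x = y := by
  have hset := eq_of_subset_of_card_le (filter_eq_true_subset h) hw
  funext i
  have hi := congrArg (i ∈ ·) hset
  simp only [mem_filter, mem_univ, true_and, eq_iff_iff] at hi
  exact Bool.coe_iff_coe.mp hi

theorem weight_eq_zero_iff {x : ι → Bool} : weight x = 0 ↔ x = fun _ => false := by
  simp [weight, filter_eq_empty_iff, funext_iff]

theorem card_filter_weight_eq [DecidableEq ι] (m : ℕ) :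
    #{x : ι → Bool | weight x = m} = (Fintype.card ι).choose m := by
  rw [← card_univ, ← card_powersetCard]
  refine card_nbij' (fun x => univ.filter fun i => x i = true) (fun s i => decide (i ∈ s))
    ?_ ?_ ?_ ?_
  · intro x hx
    simpa [weight] using (mem_filter.mp hx).2
  · intro s hs
    rw [mem_coe, mem_powersetCard] at hs
    simp [weight, ← hs.2]
  · intro x _
    funext i; simp
  · intro s _
    ext i; simp

def probe (z x : ι → Bool) : Bool := decide (weight z < weight x ∨ ∀ i, z i ≤ x i)

theorem probe_monotone (z : ι → Bool) : Monotone (probe z) := by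
  intro x y hxy
  rw [Bool.le_iff_imp]
  simp only [probe, decide_eq_true_eq]
  exact Or.imp (fun h => h.trans_le (weight_mono hxy)) (fun h i => (h i).trans (hxy i))

theorem probe_false {z : ι → Bool} (hz : z ≠ fun _ => false) :
    probe z (fun _ => false) = false := by
  have hw : weight (fun _ : ι => false) = 0 := weight_eq_zero_iff.mpr rfl
  simp only [probe, hw, Nat.not_lt_zero, false_or, decide_eq_false_iff_not]
  exact fun h => hz (funext fun i => le_bot_iff.mp (h i))

theorem probe_true (z : ι → Bool) : probe z (fun _ => true) = true := by
  simp [probe]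

theorem sum_boole_probe_mul [DecidableEq ι] (z : ι → Bool) (q : (ι → Bool) → ℝ) :
    ∑ x, (if probe z x then 1 else 0) * q x = q z + ∑ x with weight z < weight x, q x := by
  have hset : univ.filter (fun x => probe z x) =
      insert z (univ.filter fun x => weight z < weight x) := by
    ext x
    simp only [probe, decide_eq_true_eq, mem_filter, mem_univ, true_and, mem_insert]
    constructor
    · rintro (hlt | hle)
      · exact Or.inr hlt
      · rcases (weight_mono hle).lt_or_eq with hlt | heq
        · exact Or.inr hlt
        · exact Or.inl (eq_of_le_of_weight_le hle heq.ge).symm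
    · rintro (rfl | hlt)
      · exact Or.inr fun _ => le_rfl
      · exact Or.inl hlt
  simp only [boole_mul]
  rw [← sum_filter, hset, sum_insert (by simp)]

theorem forall_sum_boole_mul_eq_fiberMean_iff [DecidableEq ι] (p : (ι → Bool) → ℝ) :
    (∀ φ : (ι → Bool) → Bool, Monotone φ → φ (fun _ => false) = false →
        φ (fun _ => true) = true →
        ∑ x, (if φ x then 1 else 0) * p x =
          ∑ x, (if φ x then 1 else 0) * fiberMean weight p (weight x)) ↔
      ∀ x x', weight x = weight x' → p x = p x' := by
  constructor
  · intro H
    suffices hmean : ∀ z, p z = fiberMean weight p (weight z) by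
      intro x x' hw
      rw [hmean x, hmean x', hw]
    intro z
    by_cases hz : z = fun _ => false
    · refine (fiberMean_apply_eq_of_forall fun y hy => ?_).symm
      rw [weight_eq_zero_iff.mp (hy.trans (weight_eq_zero_iff.mpr hz)), hz]
    have h := H (probe z) (probe_monotone z) (probe_false hz) (probe_true z)
    rw [sum_boole_probe_mul, sum_boole_probe_mul,
      sum_filter_fiberMean weight p (weight z < ·)] at h
    exact add_right_cancel h
  · intro hp φ _ _ _
    refine sum_congr rfl fun x _ => ?_
    rw [fiberMean_apply_eq_of_forall fun y hy => hp y x hy]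

end Weight

theorem sum_Icc_signature_mul_tail {n : ℕ} (φ : (Fin n → Bool) → Bool)
    (hφ : φ (fun _ => false) = false) (p : (Fin n → Bool) → ℝ) :
    ∑ k ∈ Icc 1 n,
        ((n.choose (n - k + 1) : ℝ)⁻¹ *
            (∑ x with weight x = n - k + 1, if φ x then (1 : ℝ) else 0) -
          (n.choose (n - k) : ℝ)⁻¹ * (∑ x with weight x = n - k, if φ x then (1 : ℝ) else 0)) *
        ∑ x with n + 1 - k ≤ weight x, p x =
      ∑ x, (if φ x then 1 else 0) * fiberMean weight p (weight x) := by
  set b := fiberMean weight fun x : Fin n → Bool => if φ x then (1 : ℝ) else 0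
  have hb (m : ℕ) : b m = (n.choose m : ℝ)⁻¹ * ∑ x with weight x = m, if φ x then 1 else 0 := by
    simp only [b, fiberMean, card_filter_weight_eq, Fintype.card_fin]
  have hb0 : b 0 = 0 := by
    rw [hb, sum_eq_zero fun x hx => ?_, mul_zero]
    rw [weight_eq_zero_iff.mp (mem_filter.mp hx).2, hφ, if_neg Bool.false_ne_true]
  calc _ = ∑ i ∈ range n, (b (i + 1) - b i) * ∑ x with i + 1 ≤ weight x, p x := by
        refine sum_nbij' (n - ·) (n - ·) (fun k hk => ?_) (fun i hi => ?_) (fun k hk => ?_)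
          (fun i hi => ?_) fun k hk => ?_
        all_goals simp only [mem_Icc, mem_range] at *
        any_goals omega
        rw [hb, hb, show n + 1 - k = n - k + 1 by omega]
    _ = ∑ x, (b (weight x) - b 0) * p x :=
        sum_range_sub_mul_sum_filter_le weight (fun x => by simpa using weight_le_card x) b p
    _ = _ := by
        simp only [hb0, sub_zero]
        exact sum_fiberMean_mul_comm weight _ p

open MeasureTheory

theorem toReal_measure_setOf_eq_sum {Ω α : Type*} [MeasurableSpace Ω] [Fintype α]
    [MeasurableSpace α] [MeasurableSingletonClass α] (μ : Measure Ω) [IsFiniteMeasure μ]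
    {χ : Ω → α} (hχ : Measurable χ) (P : α → Prop) [DecidablePred P] :
    (μ {ω | P (χ ω)}).toReal = ∑ x with P x, (μ {ω | χ ω = x}).toReal := by
  have h := sum_measureReal_preimage_singleton (μ := μ) (univ.filter P)
    fun x _ => hχ (measurableSet_singleton x)
  simp only [coe_filter, mem_univ, true_and] at h
  exact h.symm

open scoped ProbabilityTheory

theorem stmt_7_general (n : ℕ)
    {Ω : Type*} [MeasureSpace Ω] [IsProbabilityMeasure (ℙ : Measure Ω)]
    (X : Fin n → Ω → ℝ) (hX : ∀ i, Measurable (X i))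
    (t : ℝ) :
    (∀ φ : (Fin n → Bool) → Bool,
        (∀ x y : Fin n → Bool, (∀ i, x i ≤ y i) → φ x ≤ φ y) →
        φ (fun _ => false) = false → φ (fun _ => true) = true →
        (ℙ {ω | φ (fun i => decide (t < X i ω)) = true}).toReal =
          ∑ k ∈ Finset.Icc 1 n,
            (((n.choose (n - k + 1) : ℝ))⁻¹ *
              (∑ x ∈ Finset.univ.filter
                  (fun x : Fin n → Bool =>
                    (Finset.univ.filter fun i => x i = true).card = n - k + 1),
                (if φ x then (1 : ℝ) else 0)) -
             ((n.choose (n - k) : ℝ))⁻¹ *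
              (∑ x ∈ Finset.univ.filter
                  (fun x : Fin n → Bool =>
                    (Finset.univ.filter fun i => x i = true).card = n - k),
                (if φ x then (1 : ℝ) else 0))) *
            (ℙ {ω | n + 1 - k ≤ (Finset.univ.filter fun i => t < X i ω).card}).toReal) ↔
    (∀ x x' : Fin n → Bool,
        (Finset.univ.filter fun i => x i = true).card =
          (Finset.univ.filter fun i => x' i = true).card →
        ℙ {ω | (fun i => decide (t < X i ω)) = x} =
          ℙ {ω | (fun i => decide (t < X i ω)) = x'}) := by
  have hχ : Measurable fun ω i => decide (t < X i ω) := measurable_pi_lambda _ fun i =>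
    measurable_to_bool <| by simpa [Set.preimage] using measurableSet_lt measurable_const (hX i)
  set p : (Fin n → Bool) → ℝ := fun x => (ℙ {ω | (fun i => decide (t < X i ω)) = x}).toReal
  have hφ (φ : (Fin n → Bool) → Bool) :
      (ℙ {ω | φ (fun i => decide (t < X i ω)) = true}).toReal =
        ∑ x, (if φ x then 1 else 0) * p x := by
    rw [toReal_measure_setOf_eq_sum ℙ hχ (φ · = true), sum_filter]
    exact sum_congr rfl fun x _ => (boole_mul _ _).symm
  have htail (k : ℕ) :
      (ℙ {ω | n + 1 - k ≤ #{i | t < X i ω}}).toReal = ∑ x with n + 1 - k ≤ weight x, p x := by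
    rw [← toReal_measure_setOf_eq_sum ℙ hχ (n + 1 - k ≤ weight ·)]
    simp [weight]
  have hp (x x' : Fin n → Bool) :
      ℙ {ω | (fun i => decide (t < X i ω)) = x} = ℙ {ω | (fun i => decide (t < X i ω)) = x'} ↔
        p x = p x' :=
    (ENNReal.toReal_eq_toReal_iff' (measure_ne_top _ _) (measure_ne_top _ _)).symm
  simp only [hφ, htail, hp]
  refine Iff.trans ?_ (forall_sum_boole_mul_eq_fiberMean_iff p)
  refine forall_congr' fun φ => imp_congr ⟨fun h _ _ hxy => h _ _ hxy, fun h x y hxy => h hxy⟩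
    (imp_congr_right fun h0 => imp_congr_right fun _ => ?_)
  exact Eq.congr_right (sum_Icc_signature_mul_tail φ h0 p)

/-- Theorem 4 (main): for fixed `t > 0`, the signature-based representation
`Pr(φ(χ(t)) = 1) = ∑_{k=1}^n (φ_{n-k+1} - φ_{n-k}) Pr(X_{k:n} > t)`, with
`φ_j = C(n,j)⁻¹ ∑_{|x|=j} φ(x)`, holds for every semicoherent structure function `φ`
iff the component states `χ_1(t), …, χ_n(t)` are exchangeable, i.e. `Pr(χ(t) = x)`
depends only on `|x|`. `(X_{k:n} > t)` is the event that at least `n - k + 1` of the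
`X_i` exceed `t`. -/
theorem stmt_7 (n : ℕ) (hn : 2 ≤ n)
    {Ω : Type*} [MeasureSpace Ω] [IsProbabilityMeasure (ℙ : Measure Ω)]
    (X : Fin n → Ω → ℝ) (hX : ∀ i, Measurable (X i))
    (t : ℝ) (ht : 0 < t) :
    (∀ φ : (Fin n → Bool) → Bool,
        (∀ x y : Fin n → Bool, (∀ i, x i ≤ y i) → φ x ≤ φ y) →
        φ (fun _ => false) = false → φ (fun _ => true) = true →
        (ℙ {ω | φ (fun i => decide (t < X i ω)) = true}).toReal =
          ∑ k ∈ Finset.Icc 1 n,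
            (((n.choose (n - k + 1) : ℝ))⁻¹ *
              (∑ x ∈ Finset.univ.filter
                  (fun x : Fin n → Bool =>
                    (Finset.univ.filter fun i => x i = true).card = n - k + 1),
                (if φ x then (1 : ℝ) else 0)) -
             ((n.choose (n - k) : ℝ))⁻¹ *
              (∑ x ∈ Finset.univ.filter
                  (fun x : Fin n → Bool =>
                    (Finset.univ.filter fun i => x i = true).card = n - k),
                (if φ x then (1 : ℝ) else 0))) *
            (ℙ {ω | n + 1 - k ≤ (Finset.univ.filter fun i => t < X i ω).card}).toReal) ↔
    (∀ x x' : Fin n → Bool,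
        (Finset.univ.filter fun i => x i = true).card =
          (Finset.univ.filter fun i => x' i = true).card →
        ℙ {ω | (fun i => decide (t < X i ω)) = x} =
          ℙ {ω | (fun i => decide (t < X i ω)) = x'}) :=
  stmt_7_general n X hX t
end

section
/- There exists a pair of random variables (X_1, X_2)—for instance uniform on {(2,1),(4,2),(1,3),(3,4)}—such that for every t > 0 the indicator variables χ_1(t) = Ind(X_1 > t) and χ_2(t) = Ind(X_2 > t) are exchangeable (Pr(χ(t)=(1,0)) = Pr(χ(t)=(0,1)) for all t), but X_1 and X_2 are not exchangeable (e.g., Pr(X_1 ≤ 1.5, X_2 ≤ 2.5) ≠ Pr(X_1 ≤ 2.5, X_2 ≤ 1.5)). -/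
open MeasureTheory ProbabilityTheory Set

/-!
Take `X₂` uniform on `{1, 2, 3, 4}` and `X₁ = X₂ ∘ σ` for a permutation `σ` of the sample space,
so that `X₁` and `X₂` have the same law. For identically distributed variables the events
`{X₁ > t ≥ X₂}` and `{X₂ > t ≥ X₁}` have the same probability, since each is
`P(X_i > t) - P(X₁ > t, X₂ > t)`. The joint law is not symmetric, however: `(2, 1)` is an atom
of `(X₁, X₂)`, while `X₁ ≤ 1.5` forces `X₂ = 3`.
-/

lemma ProbabilityTheory.IdentDistrib.measure_mem_and_notMem_comm {Ω γ : Type*} [MeasurableSpace Ω]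
    [MeasurableSpace γ] {μ : Measure Ω} [IsFiniteMeasure μ] {X₁ X₂ : Ω → γ}
    (h : IdentDistrib X₁ X₂ μ μ) {B : Set γ} (hB : MeasurableSet B) :
    μ {ω | X₁ ω ∈ B ∧ X₂ ω ∉ B} = μ {ω | X₁ ω ∉ B ∧ X₂ ω ∈ B} := by
  rw [show {ω | X₁ ω ∉ B ∧ X₂ ω ∈ B} = X₂ ⁻¹' B \ X₁ ⁻¹' B from ext fun _ => and_comm]
  exact measure_sdiff_symm (h.aemeasurable_fst.nullMeasurableSet_preimage hB)
    (h.aemeasurable_snd.nullMeasurableSet_preimage hB) (h.measure_mem_eq hB) (measure_ne_top _ _)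

section UniformOn

variable {Ω : Type*} [MeasurableSpace Ω] [DiscreteMeasurableSpace Ω] [Fintype Ω]

lemma measurePreserving_uniformOn_univ (σ : Ω ≃ Ω) :
    MeasurePreserving σ (uniformOn (univ : Set Ω)) (uniformOn univ) := by
  refine ⟨.of_discrete, Measure.ext fun s hs => ?_⟩
  rw [Measure.map_apply .of_discrete hs, uniformOn_univ, uniformOn_univ,
    Measure.count_apply .of_discrete, Measure.count_apply hs,
    encard_preimage_of_bijective σ.bijective]

lemma identDistrib_comp_equiv_uniformOn_univ {γ : Type*} [MeasurableSpace γ] (X : Ω → γ)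
    (σ : Ω ≃ Ω) : IdentDistrib (X ∘ σ) X (uniformOn univ) (uniformOn univ) where
  aemeasurable_fst := Measurable.of_discrete.aemeasurable
  aemeasurable_snd := Measurable.of_discrete.aemeasurable
  map_eq := by
    rw [← Measure.map_map .of_discrete .of_discrete, (measurePreserving_uniformOn_univ σ).map_eq]

end UniformOn

/-- There is a pair of random lifetimes `(X₁, X₂)` whose state indicators
`χ_i(t) = Ind(X_i > t)` are exchangeable at every time `t > 0`
(`Pr(χ(t) = (1,0)) = Pr(χ(t) = (0,1))`), yet `(X₁, X₂)` is not exchangeable: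
`Pr(X₁ ≤ 1.5, X₂ ≤ 2.5) ≠ Pr(X₁ ≤ 2.5, X₂ ≤ 1.5)`. -/
theorem stmt_11 :
    ∃ (Ω : Type) (_ : MeasureSpace Ω) (_ : IsProbabilityMeasure (ℙ : Measure Ω))
      (X₁ X₂ : Ω → ℝ),
      (∀ t : ℝ, 0 < t →
        ℙ {ω | t < X₁ ω ∧ ¬ t < X₂ ω} = ℙ {ω | ¬ t < X₁ ω ∧ t < X₂ ω}) ∧
      ℙ {ω | X₁ ω ≤ (1.5 : ℝ) ∧ X₂ ω ≤ (2.5 : ℝ)} ≠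
        ℙ {ω | X₁ ω ≤ (2.5 : ℝ) ∧ X₂ ω ≤ (1.5 : ℝ)} := by
  let X₁ : Fin 4 → ℝ := ![2, 4, 1, 3]
  let X₂ : Fin 4 → ℝ := ![1, 2, 3, 4]
  let σ : Fin 4 ≃ Fin 4 := ⟨![1, 3, 0, 2], ![2, 0, 3, 1], by decide, by decide⟩
  have hX₁ : X₁ = X₂ ∘ σ := by
    funext ω
    fin_cases ω <;> rfl
  let _ : MeasureSpace (Fin 4) := ⟨uniformOn univ⟩
  have hℙ : (ℙ : Measure (Fin 4)) = uniformOn univ := rfl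
  refine ⟨Fin 4, inferInstance, hℙ ▸ inferInstance, X₁, X₂, fun t _ => ?_, ?_⟩
  · rw [hℙ, hX₁]
    exact (identDistrib_comp_equiv_uniformOn_univ X₂ σ).measure_mem_and_notMem_comm
      measurableSet_Ioi
  · have h_empty : {ω | X₁ ω ≤ (1.5 : ℝ) ∧ X₂ ω ≤ (2.5 : ℝ)} = ∅ := by
      ext ω
      fin_cases ω <;> norm_num [X₁, X₂]
    have h_atom : (0 : Fin 4) ∈ {ω | X₁ ω ≤ (2.5 : ℝ) ∧ X₂ ω ≤ (1.5 : ℝ)} := by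
      norm_num [X₁, X₂]
    rw [hℙ, h_empty, measure_empty, ne_comm, Ne, uniformOn_eq_zero_iff finite_univ, univ_inter]
    exact nonempty_iff_ne_empty.mp ⟨0, h_atom⟩
end

section
/- Let λ, μ : {0,1}^n → ℝ. If ∑_x λ(x) φ(x) = ∑_x μ(x) φ(x) for every nondecreasing φ : {0,1}^n → {0,1} with φ(0)=0 and φ(1)=1, then λ(x) = μ(x) for every x ≠ (0,...,0). -/
lemma sub_key (n : ℕ) (x : Fin n → Bool) (f : (Fin n → Bool) → ℝ) :
    ∑ y : Fin n → Bool, f y * (if (∀ i, x i ≤ y i) then (1:ℝ) else 0)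
      - ∑ y : Fin n → Bool, f y * (if (∀ i, x i ≤ y i) ∧ y ≠ x then (1:ℝ) else 0)
      = f x := by
  rw [← Finset.sum_sub_distrib]
  rw [Finset.sum_eq_single x]
  · simp
  · intro y _ hy
    by_cases hle : ∀ i, x i ≤ y i
    · simp [hle, hy]
    · simp [hle]
  · simp

/-- Two-function version of the key lemma: if `∑_x λ(x) φ(x) = ∑_x μ(x) φ(x)` for every
semicoherent structure function `φ` (nondecreasing, `φ(0)=0`, `φ(1)=1`), then `λ = μ`
away from the all-zeros point. -/
theorem stmt_15 (n : ℕ) (hn : 2 ≤ n) (lam mu : (Fin n → Bool) → ℝ)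
    (h : ∀ φ : (Fin n → Bool) → Bool,
      (∀ x y : Fin n → Bool, (∀ i, x i ≤ y i) → φ x ≤ φ y) →
      φ (fun _ => false) = false → φ (fun _ => true) = true →
      ∑ x : Fin n → Bool, lam x * (if φ x then (1 : ℝ) else 0) =
        ∑ x : Fin n → Bool, mu x * (if φ x then (1 : ℝ) else 0)) :
    ∀ x : Fin n → Bool, x ≠ (fun _ => false) → lam x = mu x := by
  intro x hx
  have hx' : ¬ ∀ i, x i = false := fun hxa => hx (funext hxa)
  have H1 := h (fun y => decide (∀ i, x i ≤ y i))
    (by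
      intro a b hab
      simp only [Bool.le_iff_imp, decide_eq_true_eq]
      intro ha i
      exact le_trans (ha i) (hab i))
    (by
      simp only [decide_eq_false_iff_not]
      intro hc
      exact hx' fun i => le_antisymm (by simpa using hc i) (Bool.false_le _))
    (by simp)
  simp only [decide_eq_true_eq] at H1
  by_cases hx1 : x = fun _ => true
  · -- x is top; the first indicator is supported only at x
    have e : ∀ (f : (Fin n → Bool) → ℝ),
        ∑ y : Fin n → Bool, f y * (if (∀ i, x i ≤ y i) then (1:ℝ) else 0) = f x := by
      intro f
      rw [Finset.sum_eq_single x]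
      · simp
      · intro y _ hy
        have : ¬ ∀ i, x i ≤ y i := by
          intro hc
          apply hy
          funext i
          have hxi : x i = true := by rw [hx1]
          have h2 : true ≤ y i := hxi ▸ hc i
          rw [hxi]
          exact le_antisymm (Bool.le_true _) h2
        simp [this]
      · simp
    rw [e lam, e mu] at H1
    exact H1
  · have H2 := h (fun y => decide ((∀ i, x i ≤ y i) ∧ y ≠ x))
      (by
        intro a b hab
        simp only [Bool.le_iff_imp, decide_eq_true_eq]
        rintro ⟨ha, hax⟩
        refine ⟨fun i => le_trans (ha i) (hab i), ?_⟩
        intro hbx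
        apply hax
        funext i
        exact le_antisymm (by rw [← hbx]; exact hab i) (ha i)
      )
      (by
        simp only [decide_eq_false_iff_not]
        rintro ⟨hc, -⟩
        exact hx' fun i => le_antisymm (by simpa using hc i) (Bool.false_le _))
      (by
        simp only [decide_eq_true_eq]
        exact ⟨fun i => Bool.le_true _, fun hc => hx1 hc.symm⟩)
    simp only [decide_eq_true_eq] at H2
    have hl := sub_key n x lam
    have hm := sub_key n x mu
    rw [H1, H2] at hl
    rw [hm] at hl
    exact hl.symm
end

section
/- Assume F has no ties. The following are equivalent: (i) both representations Pr(T > t) = ∑_k Pr(T = X_{k:n}) Pr(X_{k:n} > t) and Pr(T > t) = ∑_k (φ_{n−k+1} − φ_{n−k}) Pr(X_{k:n} > t) hold for every semicoherent φ and every t > 0; (ii) Pr(T = X_{k:n}) = φ_{n−k+1} − φ_{n−k} for every semicoherent φ and every k, and χ_1(t),...,χ_n(t) are exchangeable for every t > 0; (iii) the relative quality function q satisfies q(A) = 1/C(n,|A|) for all A, and χ_1(t),...,χ_n(t) are exchangeable for every t > 0. -/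
/-!
Write `p_t(x) = Pr(χ(t) = x)`, so that `Pr(T > t) = ∑_{φ(x)=1} p_t(x)`. Summation by parts
against the tails `Pr(X_{k:n} > t) = Pr(|χ(t)| ≥ n - k + 1)` turns the two representations into
`∑_{φ(x)=1} Pr(|χ(t)| = |x|) q(x)` and `∑_{φ(x)=1} Pr(|χ(t)| = |x|) / C(n,|x|)`.

Testing with the semicoherent structures `φ = Ind(x₀ ≤ ·)`, `x₀ ≠ 0`, turns these into weighted
sums over the up-sets of the cube `{0,1}^n`, and such sums are triangular: by downward induction,
a function on the cube is determined by its weighted up-set sums as soon as the weight does not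
vanish at `x₀`. So the second representation for all `φ` forces
`p_t(x) = Pr(|χ(t)| = |x|) / C(n,|x|)`, i.e. exchangeability, and the two together force
`q(x) = 1/C(n,|x|)`, because every level `0 < m < n` has positive probability for some `t > 0`:
with no ties, some rational `t > 0` separates exactly `m` of the lifetimes. The same test
structures show that `Pr(T = X_{k:n}) = φ_{n-k+1} - φ_{n-k}` for all `φ` iff `q(x) = 1/C(n,|x|)`.
-/

open MeasureTheory
open scoped ProbabilityTheory

/-- Number of ones in `x ∈ {0,1}^n`. -/
def cntOnes {n : ℕ} (x : Fin n → Bool) : ℕ :=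
  (Finset.univ.filter fun i => x i = true).card

/-- `φ` is a semicoherent structure function: nondecreasing, `φ(0)=0`, `φ(1)=1`. -/
def Semicoherent {n : ℕ} (φ : (Fin n → Bool) → Bool) : Prop :=
  (∀ x y : Fin n → Bool, (∀ i, x i ≤ y i) → φ x ≤ φ y) ∧
    φ (fun _ => false) = false ∧ φ (fun _ => true) = true

/-- `φ_j = C(n,j)⁻¹ ∑_{|x|=j} φ(x)`. -/
noncomputable def phiAvg {n : ℕ} (φ : (Fin n → Bool) → Bool) (j : ℕ) : ℝ :=
  ((n.choose j : ℝ))⁻¹ *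
    ∑ x ∈ Finset.univ.filter (fun x : Fin n → Bool => cntOnes x = j),
      (if φ x then (1 : ℝ) else 0)

open Finset

lemma eq_zero_of_forall_exists_sum_Ici {α : Type*} [Fintype α] [PartialOrder α] [DecidableLE α]
    {s : Set α} (hs : IsUpperSet s) {g : α → ℝ}
    (h : ∀ x ∈ s, ∃ c : α → ℝ, c x ≠ 0 ∧ ∑ y ∈ univ.filter (x ≤ ·), c y * g y = 0) :
    ∀ x ∈ s, g x = 0 := by
  classical
  intro x
  induction x using WellFoundedGT.induction with
  | _ x ih =>
    intro hx
    obtain ⟨c, hcx, hsum⟩ := h x hx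
    have habove : ∑ y ∈ (univ.filter (x ≤ ·)).erase x, c y * g y = 0 := by
      refine sum_eq_zero fun y hy => ?_
      obtain ⟨hne, hxy⟩ : y ≠ x ∧ x ≤ y := by simpa using hy
      rw [ih y (lt_of_le_of_ne hxy hne.symm) (hs hxy hx), mul_zero]
    rw [← sum_erase_add _ _ (by simp : x ∈ univ.filter (x ≤ ·)), habove, zero_add] at hsum
    exact (mul_eq_zero.1 hsum).resolve_left hcx

lemma sum_Icc_one_sub (n : ℕ) (F : ℕ → ℝ) :
    ∑ k ∈ Icc 1 n, F (n - k) = ∑ i ∈ range n, F i := by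
  rw [← Ico_succ_right_eq_Icc, Order.succ_eq_add_one, sum_Ico_reflect _ _ le_rfl]
  simp

lemma sum_Icc_sub_mul_sum_tail {β : Type*} [Fintype β] {n : ℕ} {f : β → ℕ}
    (hf : ∀ x, f x ≤ n) (p : β → ℝ) {c : ℕ → ℝ} (hc : c 0 = 0) :
    ∑ k ∈ Icc 1 n, (c (n - k + 1) - c (n - k)) * ∑ x ∈ univ.filter (n + 1 - k ≤ f ·), p x =
      ∑ x, p x * c (f x) := by
  calc ∑ k ∈ Icc 1 n, (c (n - k + 1) - c (n - k)) * ∑ x ∈ univ.filter (n + 1 - k ≤ f ·), p x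
      = ∑ i ∈ range n, (c (i + 1) - c i) * ∑ x ∈ univ.filter (i + 1 ≤ f ·), p x := by
        rw [← sum_Icc_one_sub n fun i =>
          (c (i + 1) - c i) * ∑ x ∈ univ.filter (i + 1 ≤ f ·), p x]
        refine sum_congr rfl fun k hk => ?_
        rw [show n + 1 - k = n - k + 1 by have := (mem_Icc.1 hk).2; omega]
    _ = ∑ x, p x * ∑ i ∈ range (f x), (c (i + 1) - c i) := by
        simp_rw [mul_sum, sum_filter]
        rw [sum_comm]
        refine sum_congr rfl fun x _ => ?_
        have hrange : (range n).filter (· + 1 ≤ f x) = range (f x) := by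
          ext i
          have := hf x
          simp only [mem_filter, mem_range]
          omega
        rw [← sum_filter, hrange]
        exact sum_congr rfl fun i _ => mul_comm _ _
    _ = ∑ x, p x * c (f x) := by simp only [sum_range_sub, hc, sub_zero]

lemma exists_rat_card_lt_eq {n m : ℕ} {f : Fin n → ℝ} (hf : Function.Injective f) (hm : 1 ≤ m)
    (hmn : m < n) : ∃ r : ℚ, (∃ i, f i < r) ∧ #{i | (r : ℝ) < f i} = m := by
  set σ := Tuple.sort f
  have hg : StrictMono (f ∘ σ) :=
    (Tuple.monotone_sort f).strictMono_of_injective (hf.comp σ.injective)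
  let lo : Fin n := ⟨n - m - 1, by omega⟩
  let hi : Fin n := ⟨n - m, by omega⟩
  obtain ⟨r, hlo, hhi⟩ := exists_rat_btwn (hg (show lo < hi from Fin.mk_lt_mk.2 (by omega)))
  refine ⟨r, ⟨σ lo, hlo⟩, ?_⟩
  have hfilter : univ.filter (fun j => (r : ℝ) < f (σ j)) = Ici hi := by
    ext j
    simp only [mem_filter, mem_univ, true_and, mem_Ici]
    constructor
    · intro hj
      by_contra! hji
      have hjlo : j ≤ lo :=
        Fin.le_def.2 (by have := Fin.lt_def.1 hji; dsimp [lo, hi] at this ⊢; omega)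
      exact (hj.trans_le (hg.monotone hjlo)).not_gt hlo
    · exact fun hj => hhi.trans_le (hg.monotone hj)
  rw [← map_univ_equiv σ, filter_map, card_map]
  show #(univ.filter fun j => (r : ℝ) < f (σ j)) = m
  rw [hfilter, Fin.card_Ici]
  dsimp [hi]
  omega

section Cube

variable {n : ℕ}

instance : DecidableLE (Fin n → Bool) := fun _ _ => Fintype.decidableForallFintype

lemma cntOnes_decide (p : Fin n → Prop) [DecidablePred p] :
    cntOnes (fun i => decide (p i)) = #{i | p i} := by
  simp [cntOnes]

lemma cntOnes_le (x : Fin n → Bool) : cntOnes x ≤ n :=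
  (card_filter_le _ _).trans_eq (card_fin n)

lemma cntOnes_top : cntOnes (⊤ : Fin n → Bool) = n := by
  simp [cntOnes]

lemma cntOnes_eq_zero_iff {x : Fin n → Bool} : cntOnes x = 0 ↔ x = ⊥ := by
  simp [cntOnes, funext_iff]

lemma cntOnes_pos {x : Fin n → Bool} : 0 < cntOnes x ↔ x ≠ ⊥ :=
  pos_iff_ne_zero.trans cntOnes_eq_zero_iff.not

lemma filter_cntOnes_eq_zero : ({x | cntOnes x = 0} : Finset (Fin n → Bool)) = {⊥} := by
  ext x
  simp [cntOnes_eq_zero_iff]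

lemma filter_eq_true_subset_of_le {x y : Fin n → Bool} (h : x ≤ y) :
    univ.filter (fun i => x i = true) ⊆ univ.filter (fun i => y i = true) :=
  monotone_filter_right _ fun i _ => Bool.le_iff_imp.1 (h i)

lemma cntOnes_mono : Monotone (cntOnes (n := n)) := fun _ _ h =>
  card_le_card (filter_eq_true_subset_of_le h)

lemma eq_of_le_of_cntOnes_le {x y : Fin n → Bool} (h : x ≤ y) (hc : cntOnes y ≤ cntOnes x) :
    x = y := by
  have hs := eq_of_subset_of_card_le (filter_eq_true_subset_of_le h) hc
  funext i
  have hi := congrArg (i ∈ ·) hs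
  simp only [mem_filter, mem_univ, true_and, eq_iff_iff] at hi
  cases hx : x i <;> cases hy : y i <;> simp_all

lemma cntOnes_strictMono : StrictMono (cntOnes (n := n)) := fun _ _ h =>
  (cntOnes_mono h.le).lt_of_ne fun hc => h.ne (eq_of_le_of_cntOnes_le h.le hc.ge)

lemma cntOnes_lt_of_ne_top {x : Fin n → Bool} (h : x ≠ ⊤) : cntOnes x < n :=
  (cntOnes_strictMono (lt_top_iff_ne_top.2 h)).trans_eq cntOnes_top

lemma card_filter_cntOnes_eq (m : ℕ) :
    #{x : Fin n → Bool | cntOnes x = m} = n.choose m := by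
  rw [show n.choose m = #(powersetCard m (univ : Finset (Fin n))) by simp]
  refine card_nbij' (fun x => univ.filter (fun i => x i = true)) (fun s i => decide (i ∈ s))
    ?_ ?_ ?_ ?_
  · intro x hx
    simpa [mem_powersetCard, cntOnes] using (mem_filter.1 hx).2
  · intro s hs
    rw [mem_coe, mem_filter]
    simp_all [mem_powersetCard, cntOnes]
  · intro x _
    funext i
    simp
  · intro s _
    ext i
    simp

lemma semicoherent_decide_le {x₀ : Fin n → Bool} (hx₀ : x₀ ≠ ⊥) :
    Semicoherent fun y => decide (x₀ ≤ y) := by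
  refine ⟨fun x y hxy => Bool.le_iff_imp.2 fun hx => ?_, ?_, ?_⟩
  · simpa using (of_decide_eq_true hx).trans hxy
  · exact decide_eq_false fun h : x₀ ≤ ⊥ => hx₀ (le_bot_iff.1 h)
  · exact decide_eq_true (le_top : x₀ ≤ ⊤)

lemma eq_of_forall_exists_sum_Ici_mul_eq {a b : (Fin n → Bool) → ℝ} (hbot : a ⊥ = b ⊥)
    (h : ∀ x ≠ ⊥, ∃ c : (Fin n → Bool) → ℝ, c x ≠ 0 ∧
      ∑ y ∈ univ.filter (x ≤ ·), c y * a y = ∑ y ∈ univ.filter (x ≤ ·), c y * b y) :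
    a = b := by
  have hsub := eq_zero_of_forall_exists_sum_Ici (isUpperSet_Ioi ⊥) (g := a - b) fun x hx => by
    obtain ⟨c, hc, hsum⟩ := h x (ne_bot_of_gt hx)
    exact ⟨c, hc, by simp [mul_sub, sum_sub_distrib, hsum]⟩
  funext x
  obtain rfl | hx := eq_or_ne x ⊥
  · exact hbot
  · exact sub_eq_zero.1 (hsub x (bot_lt_iff_ne_bot.2 hx))

end Cube

section LevelSums

variable {n : ℕ}

/-- The paper's `φ^q_j` for `v = q`, and `φ_j` for `v x = C(n,|x|)⁻¹`. -/
def levelSum (v : (Fin n → Bool) → ℝ) (φ : (Fin n → Bool) → Bool) (j : ℕ) : ℝ :=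
  ∑ x ∈ univ.filter (fun x : Fin n → Bool => cntOnes x = j), v x * (if φ x then 1 else 0)

lemma phiAvg_eq_levelSum (φ : (Fin n → Bool) → Bool) (j : ℕ) :
    phiAvg φ j = levelSum (fun x => ((n.choose (cntOnes x) : ℝ))⁻¹) φ j := by
  rw [phiAvg, levelSum, mul_sum]
  refine sum_congr rfl fun x hx => ?_
  rw [(mem_filter.1 hx).2]

lemma levelSum_zero (v : (Fin n → Bool) → ℝ) {φ : (Fin n → Bool) → Bool} (hφ : φ ⊥ = false) :
    levelSum v φ 0 = 0 := by
  simp [levelSum, filter_cntOnes_eq_zero, hφ]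

lemma levelSum_decide_le_cntOnes (v : (Fin n → Bool) → ℝ) (x₀ : Fin n → Bool) :
    levelSum v (fun y => decide (x₀ ≤ y)) (cntOnes x₀) = v x₀ := by
  rw [levelSum, sum_eq_single_of_mem x₀ (by simp)]
  · simp
  intro y hy hne
  have hy := (mem_filter.1 hy).2
  simp only [decide_eq_true_eq, mul_ite, mul_one, mul_zero, ite_eq_right_iff]
  exact fun hle => absurd (eq_of_le_of_cntOnes_le hle hy.le).symm hne

lemma levelSum_decide_le_of_lt (v : (Fin n → Bool) → ℝ) {x₀ : Fin n → Bool} {j : ℕ}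
    (hj : j < cntOnes x₀) : levelSum v (fun y => decide (x₀ ≤ y)) j = 0 := by
  refine sum_eq_zero fun y hy => ?_
  have hy := (mem_filter.1 hy).2
  simp only [decide_eq_true_eq, mul_ite, mul_one, mul_zero, ite_eq_right_iff]
  exact fun hle => absurd (cntOnes_mono hle) (by omega)

lemma sum_mul_levelSum (p v : (Fin n → Bool) → ℝ) (φ : (Fin n → Bool) → Bool) :
    ∑ x, p x * levelSum v φ (cntOnes x) =
      ∑ y ∈ univ.filter (φ · = true),
        (∑ x ∈ univ.filter (fun x => cntOnes x = cntOnes y), p x) * v y := by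
  simp_rw [levelSum, mul_sum]
  rw [sum_comm' (t' := univ) (s' := fun y => univ.filter (fun x => cntOnes x = cntOnes y))
    (by simp [eq_comm]), sum_filter]
  refine sum_congr rfl fun y _ => ?_
  split_ifs <;> simp [sum_mul, *]

lemma sum_sub_levelSum_mul_sum_tail (p v : (Fin n → Bool) → ℝ) {φ : (Fin n → Bool) → Bool}
    (hφ : φ ⊥ = false) :
    ∑ k ∈ Icc 1 n, (levelSum v φ (n - k + 1) - levelSum v φ (n - k)) *
        ∑ x ∈ univ.filter (fun x => n + 1 - k ≤ cntOnes x), p x =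
      ∑ y ∈ univ.filter (φ · = true),
        (∑ x ∈ univ.filter (fun x => cntOnes x = cntOnes y), p x) * v y := by
  rw [sum_Icc_sub_mul_sum_tail cntOnes_le p (levelSum_zero v hφ), sum_mul_levelSum]

lemma forall_levelSum_sub_eq_iff {q : (Fin n → Bool) → ℝ} (hq : q ⊥ = 1) :
    (∀ φ : (Fin n → Bool) → Bool, Semicoherent φ → ∀ k ∈ Icc 1 n,
      levelSum q φ (n - k + 1) - levelSum q φ (n - k) =
        phiAvg φ (n - k + 1) - phiAvg φ (n - k)) ↔
      ∀ x, q x = 1 / (n.choose (cntOnes x) : ℝ) := by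
  constructor
  · intro h x
    obtain rfl | hx := eq_or_ne x ⊥
    · simp [hq, cntOnes_eq_zero_iff.2 rfl]
    have hpos := cntOnes_pos.2 hx
    have hle := cntOnes_le x
    have := h _ (semicoherent_decide_le hx) (n - cntOnes x + 1) (mem_Icc.2 ⟨by omega, by omega⟩)
    rw [show n - (n - cntOnes x + 1) + 1 = cntOnes x by omega,
      show n - (n - cntOnes x + 1) = cntOnes x - 1 by omega, phiAvg_eq_levelSum,
      phiAvg_eq_levelSum, levelSum_decide_le_cntOnes, levelSum_decide_le_cntOnes,
      levelSum_decide_le_of_lt _ (by omega), levelSum_decide_le_of_lt _ (by omega)] at this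
    simpa using this
  · intro h φ _ k _
    obtain rfl : q = fun x => ((n.choose (cntOnes x) : ℝ))⁻¹ :=
      funext fun x => (h x).trans (one_div _)
    simp only [phiAvg_eq_levelSum]

end LevelSums

section States

variable {Ω : Type*} [MeasureSpace Ω] {n : ℕ}

/-- `stateProb X t x = Pr(χ(t) = x)` and `levelProb X t m = Pr(|χ(t)| = m)` for the state
vector `χ(t) = (Ind(X_i > t))_i`. -/
noncomputable def stateProb (X : Fin n → Ω → ℝ) (t : ℝ) (x : Fin n → Bool) : ℝ :=
  (ℙ {ω | (fun i => decide (t < X i ω)) = x}).toReal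

noncomputable def levelProb (X : Fin n → Ω → ℝ) (t : ℝ) (m : ℕ) : ℝ :=
  (ℙ {ω | #{i | t < X i ω} = m}).toReal

variable {X : Fin n → Ω → ℝ}

lemma measurable_state (hX : ∀ i, Measurable (X i)) (t : ℝ) :
    Measurable fun ω i => decide (t < X i ω) :=
  measurable_pi_lambda _ fun i => measurable_to_bool <| by
    simpa [Set.preimage] using measurableSet_lt measurable_const (hX i)

section Finite

variable [IsFiniteMeasure (ℙ : Measure Ω)]

lemma toReal_measure_state_mem (hX : ∀ i, Measurable (X i)) (P : (Fin n → Bool) → Prop)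
    [DecidablePred P] (t : ℝ) :
    (ℙ {ω | P (fun i => decide (t < X i ω))}).toReal =
      ∑ x ∈ univ.filter P, stateProb X t x := by
  have hset : {ω | P (fun i => decide (t < X i ω))} =
      (fun ω i => decide (t < X i ω)) ⁻¹' ↑(univ.filter P) := by
    ext
    simp
  rw [hset, ← sum_measure_preimage_singleton _ fun y _ =>
      measurable_state hX t (measurableSet_singleton y),
    ENNReal.toReal_sum fun _ _ => measure_ne_top _ _]
  rfl

lemma toReal_measure_system (hX : ∀ i, Measurable (X i)) (φ : (Fin n → Bool) → Bool)
    (t : ℝ) :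
    (ℙ {ω | φ (fun i => decide (t < X i ω)) = true}).toReal =
      ∑ x ∈ univ.filter (φ · = true), stateProb X t x :=
  toReal_measure_state_mem hX (φ · = true) t

lemma levelProb_eq_sum (hX : ∀ i, Measurable (X i)) (t : ℝ) (m : ℕ) :
    levelProb X t m = ∑ x ∈ univ.filter (fun x => cntOnes x = m), stateProb X t x := by
  simp only [levelProb, ← toReal_measure_state_mem hX, cntOnes_decide]

lemma toReal_measure_tail (hX : ∀ i, Measurable (X i)) (t : ℝ) (j : ℕ) :
    (ℙ {ω | j ≤ #{i | t < X i ω}}).toReal =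
      ∑ x ∈ univ.filter (fun x => j ≤ cntOnes x), stateProb X t x := by
  simp only [← toReal_measure_state_mem hX, cntOnes_decide]

lemma sum_levelSum_sub_mul_toReal_measure_tail (hX : ∀ i, Measurable (X i))
    (v : (Fin n → Bool) → ℝ) {φ : (Fin n → Bool) → Bool} (hφ : Semicoherent φ) (t : ℝ) :
    ∑ k ∈ Icc 1 n, (levelSum v φ (n - k + 1) - levelSum v φ (n - k)) *
        (ℙ {ω | n + 1 - k ≤ #{i | t < X i ω}}).toReal =
      ∑ y ∈ univ.filter (φ · = true), levelProb X t (cntOnes y) * v y := by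
  simp only [toReal_measure_tail hX, sum_sub_levelSum_mul_sum_tail _ _ hφ.2.1,
    levelProb_eq_sum hX]

lemma forall_measure_state_eq_iff (hX : ∀ i, Measurable (X i)) (t : ℝ) :
    (∀ x x' : Fin n → Bool, cntOnes x = cntOnes x' →
      ℙ {ω | (fun i => decide (t < X i ω)) = x} =
        ℙ {ω | (fun i => decide (t < X i ω)) = x'}) ↔
      ∀ x, stateProb X t x = levelProb X t (cntOnes x) * ((n.choose (cntOnes x) : ℝ))⁻¹ := by
  constructor
  · intro h x
    have hC : (n.choose (cntOnes x) : ℝ) ≠ 0 := by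
      exact_mod_cast (Nat.choose_pos (cntOnes_le x)).ne'
    have hlevel : ∀ y ∈ univ.filter (fun y => cntOnes y = cntOnes x),
        stateProb X t y = stateProb X t x := fun y hy =>
      congrArg ENNReal.toReal (h y x (mem_filter.1 hy).2)
    rw [levelProb_eq_sum hX, sum_congr rfl hlevel, sum_const, card_filter_cntOnes_eq,
      nsmul_eq_mul, mul_comm, inv_mul_cancel_left₀ hC]
  · intro h x x' hxx'
    have := (h x).trans (hxx' ▸ (h x').symm)
    exact (ENNReal.toReal_eq_toReal_iff' (measure_ne_top _ _) (measure_ne_top _ _)).1 this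

lemma stateProb_eq_of_forall_semicoherent (hX : ∀ i, Measurable (X i)) (t : ℝ)
    (h : ∀ φ : (Fin n → Bool) → Bool, Semicoherent φ →
      ∑ y ∈ univ.filter (φ · = true), stateProb X t y =
        ∑ y ∈ univ.filter (φ · = true),
          levelProb X t (cntOnes y) * ((n.choose (cntOnes y) : ℝ))⁻¹) (x : Fin n → Bool) :
    stateProb X t x = levelProb X t (cntOnes x) * ((n.choose (cntOnes x) : ℝ))⁻¹ := by
  refine congrFun (eq_of_forall_exists_sum_Ici_mul_eq (a := stateProb X t)
    (b := fun x => levelProb X t (cntOnes x) * ((n.choose (cntOnes x) : ℝ))⁻¹) ?_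
    fun x₀ hx₀ => ⟨1, one_ne_zero, ?_⟩) x
  · simp [levelProb_eq_sum hX, filter_cntOnes_eq_zero, cntOnes_eq_zero_iff.2 rfl]
  · simpa only [decide_eq_true_eq, Pi.one_apply, one_mul] using
      h _ (semicoherent_decide_le hx₀)

end Finite

lemma exists_levelProb_pos [IsProbabilityMeasure (ℙ : Measure Ω)] (hpos : ∀ i ω, 0 < X i ω)
    (hnoties : ∀ i j : Fin n, i ≠ j → ℙ {ω | X i ω = X j ω} = 0) {m : ℕ} (hm : 1 ≤ m)
    (hmn : m < n) : ∃ t, 0 < t ∧ 0 < levelProb X t m := by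
  by_contra! h
  have hzero : ∀ t, 0 < t → ℙ {ω | #{i | t < X i ω} = m} = 0 := fun t ht =>
    ((ENNReal.toReal_eq_zero_iff _).1 ((h t ht).antisymm ENNReal.toReal_nonneg)).resolve_right
      (measure_ne_top _ _)
  have hnull : ∀ᵐ ω, ∀ r : ℚ, 0 < (r : ℝ) → #{i | (r : ℝ) < X i ω} ≠ m :=
    ae_all_iff.2 fun r => Filter.eventually_imp_distrib_left.2 fun hr =>
      measure_eq_zero_iff_ae_notMem.1 (hzero r hr)
  have hinj : ∀ᵐ ω, ∀ i j, i ≠ j → X i ω ≠ X j ω :=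
    ae_all_iff.2 fun i => ae_all_iff.2 fun j => Filter.eventually_imp_distrib_left.2 fun hij =>
      measure_eq_zero_iff_ae_notMem.1 (hnoties i j hij)
  obtain ⟨ω, hω, hω'⟩ := (hinj.and hnull).exists
  obtain ⟨r, ⟨i, hi⟩, hr⟩ := exists_rat_card_lt_eq (fun i j => not_imp_not.1 (hω i j)) hm hmn
  exact hω' r ((hpos i ω).trans hi) hr

lemma eq_inv_choose_of_forall_semicoherent [IsProbabilityMeasure (ℙ : Measure Ω)]
    (hpos : ∀ i ω, 0 < X i ω) (hnoties : ∀ i j : Fin n, i ≠ j → ℙ {ω | X i ω = X j ω} = 0)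
    {q : (Fin n → Bool) → ℝ} (hq_bot : q ⊥ = 1) (hq_top : q ⊤ = 1)
    (h : ∀ φ : (Fin n → Bool) → Bool, Semicoherent φ → ∀ t : ℝ, 0 < t →
      ∑ y ∈ univ.filter (φ · = true), levelProb X t (cntOnes y) * q y =
        ∑ y ∈ univ.filter (φ · = true),
          levelProb X t (cntOnes y) * ((n.choose (cntOnes y) : ℝ))⁻¹) (x : Fin n → Bool) :
    q x = 1 / (n.choose (cntOnes x) : ℝ) := by
  refine congrFun (eq_of_forall_exists_sum_Ici_mul_eq (a := q)
    (b := fun x => 1 / (n.choose (cntOnes x) : ℝ)) ?_ fun x₀ hx₀ => ?_) x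
  · simp [hq_bot, cntOnes_eq_zero_iff.2 rfl]
  obtain rfl | hx₀_top := eq_or_ne x₀ ⊤
  · exact ⟨1, one_ne_zero, by simp [filter_eq', hq_top, cntOnes_top]⟩
  obtain ⟨t, ht, hL⟩ := exists_levelProb_pos hpos hnoties (cntOnes_pos.2 hx₀)
    (cntOnes_lt_of_ne_top hx₀_top)
  refine ⟨fun y => levelProb X t (cntOnes y), hL.ne', ?_⟩
  simpa only [decide_eq_true_eq, one_div] using h _ (semicoherent_decide_le hx₀) t ht

lemma forall_sum_stateProb_eq_iff [IsProbabilityMeasure (ℙ : Measure Ω)]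
    (hX : ∀ i, Measurable (X i)) (hpos : ∀ i ω, 0 < X i ω)
    (hnoties : ∀ i j : Fin n, i ≠ j → ℙ {ω | X i ω = X j ω} = 0)
    {q : (Fin n → Bool) → ℝ} (hq_bot : q ⊥ = 1) (hq_top : q ⊤ = 1) :
    (∀ φ : (Fin n → Bool) → Bool, Semicoherent φ → ∀ t : ℝ, 0 < t →
      ∑ y ∈ univ.filter (φ · = true), stateProb X t y =
          ∑ y ∈ univ.filter (φ · = true), levelProb X t (cntOnes y) * q y ∧
        ∑ y ∈ univ.filter (φ · = true), stateProb X t y =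
          ∑ y ∈ univ.filter (φ · = true),
            levelProb X t (cntOnes y) * ((n.choose (cntOnes y) : ℝ))⁻¹) ↔
      (∀ x, q x = 1 / (n.choose (cntOnes x) : ℝ)) ∧
        ∀ t : ℝ, 0 < t → ∀ x,
          stateProb X t x = levelProb X t (cntOnes x) * ((n.choose (cntOnes x) : ℝ))⁻¹ := by
  constructor
  · intro h
    exact ⟨eq_inv_choose_of_forall_semicoherent hpos hnoties hq_bot hq_top
        fun φ hφ t ht => (h φ hφ t ht).1.symm.trans (h φ hφ t ht).2,
      fun t ht => stateProb_eq_of_forall_semicoherent hX t fun φ hφ => (h φ hφ t ht).2⟩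
  · rintro ⟨hq, hstate⟩ φ _ t ht
    have hsum := sum_congr rfl fun y (_ : y ∈ univ.filter (φ · = true)) => hstate t ht y
    refine ⟨hsum.trans (sum_congr rfl fun y _ => ?_), hsum⟩
    rw [hq, one_div]

end States

theorem stmt_17_general (n : ℕ)
    {Ω : Type*} [MeasureSpace Ω] [IsProbabilityMeasure (ℙ : Measure Ω)]
    (X : Fin n → Ω → ℝ) (hX : ∀ i, Measurable (X i)) (hpos : ∀ i ω, 0 < X i ω)
    (hnoties : ∀ i j : Fin n, i ≠ j → ℙ {ω | X i ω = X j ω} = 0)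
    (q : (Fin n → Bool) → ℝ)
    (hq : ∀ x, q x =
      (ℙ {ω | ∀ i, x i = false → ∀ j, x j = true → X i ω < X j ω}).toReal)
    (PT : ((Fin n → Bool) → Bool) → ℕ → ℝ)
    (hPT : ∀ φ : (Fin n → Bool) → Bool, Semicoherent φ → ∀ k ∈ Finset.Icc 1 n,
      PT φ k =
        (∑ x ∈ Finset.univ.filter (fun x : Fin n → Bool => cntOnes x = n - k + 1),
          q x * (if φ x then (1 : ℝ) else 0)) -
        (∑ x ∈ Finset.univ.filter (fun x : Fin n → Bool => cntOnes x = n - k),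
          q x * (if φ x then (1 : ℝ) else 0))) :
    ((∀ φ : (Fin n → Bool) → Bool, Semicoherent φ → ∀ t : ℝ, 0 < t →
        (ℙ {ω | φ (fun i => decide (t < X i ω)) = true}).toReal =
          (∑ k ∈ Finset.Icc 1 n, PT φ k *
            (ℙ {ω | n + 1 - k ≤ (Finset.univ.filter fun i => t < X i ω).card}).toReal) ∧
        (ℙ {ω | φ (fun i => decide (t < X i ω)) = true}).toReal =
          ∑ k ∈ Finset.Icc 1 n, (phiAvg φ (n - k + 1) - phiAvg φ (n - k)) *
            (ℙ {ω | n + 1 - k ≤ (Finset.univ.filter fun i => t < X i ω).card}).toReal) ↔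
      ((∀ φ : (Fin n → Bool) → Bool, Semicoherent φ → ∀ k ∈ Finset.Icc 1 n,
          PT φ k = phiAvg φ (n - k + 1) - phiAvg φ (n - k)) ∧
        (∀ t : ℝ, 0 < t → ∀ x x' : Fin n → Bool, cntOnes x = cntOnes x' →
          ℙ {ω | (fun i => decide (t < X i ω)) = x} =
            ℙ {ω | (fun i => decide (t < X i ω)) = x'}))) ∧
    (((∀ φ : (Fin n → Bool) → Bool, Semicoherent φ → ∀ k ∈ Finset.Icc 1 n,
          PT φ k = phiAvg φ (n - k + 1) - phiAvg φ (n - k)) ∧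
        (∀ t : ℝ, 0 < t → ∀ x x' : Fin n → Bool, cntOnes x = cntOnes x' →
          ℙ {ω | (fun i => decide (t < X i ω)) = x} =
            ℙ {ω | (fun i => decide (t < X i ω)) = x'})) ↔
      ((∀ x : Fin n → Bool, q x = 1 / (n.choose (cntOnes x) : ℝ)) ∧
        (∀ t : ℝ, 0 < t → ∀ x x' : Fin n → Bool, cntOnes x = cntOnes x' →
          ℙ {ω | (fun i => decide (t < X i ω)) = x} =
            ℙ {ω | (fun i => decide (t < X i ω)) = x'}))) := by
  have hq_const : ∀ b, q (fun _ => b) = 1 := fun b => by cases b <;> simp [hq]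
  have hPT_levelSum : ∀ φ, Semicoherent φ → ∀ k ∈ Icc 1 n,
      PT φ k = levelSum q φ (n - k + 1) - levelSum q φ (n - k) := hPT
  simp +contextual only [hPT_levelSum]
  rw [forall_levelSum_sub_eq_iff (hq_const false)]
  simp +contextual only [phiAvg_eq_levelSum, toReal_measure_system hX,
    sum_levelSum_sub_mul_toReal_measure_tail hX]
  rw [forall₂_congr fun t (_ : 0 < t) => forall_measure_state_eq_iff hX t,
    forall_sum_stateProb_eq_iff hX hpos hnoties (hq_const false) (hq_const true)]
  exact ⟨Iff.rfl, trivial⟩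

/-- Theorem 7 (final): assume no ties, and take as given the formula
`Pr(T = X_{k:n}) = φ^q_{n-k+1} - φ^q_{n-k}` (hypothesis `hPT`, with `q` the relative
quality function). Then the following are equivalent:
(i) both the representation `Pr(T > t) = ∑_k Pr(T = X_{k:n}) Pr(X_{k:n} > t)` and the
signature representation `Pr(T > t) = ∑_k (φ_{n-k+1} - φ_{n-k}) Pr(X_{k:n} > t)` hold for
every semicoherent `φ` and every `t > 0`;
(ii) `Pr(T = X_{k:n}) = φ_{n-k+1} - φ_{n-k}` for every semicoherent `φ` and `k ∈ [n]`, and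
the states `χ_1(t), …, χ_n(t)` are exchangeable for every `t > 0`;
(iii) `q(A) = 1/C(n,|A|)` for all `A`, and the states are exchangeable for every `t > 0`.
Here `Pr(T > t) = Pr(φ(χ(t)) = 1)` and `(X_{k:n} > t)` is the event that at least
`n - k + 1` of the `X_i` exceed `t`. -/
theorem stmt_17 (n : ℕ) (hn : 2 ≤ n)
    {Ω : Type*} [MeasureSpace Ω] [IsProbabilityMeasure (ℙ : Measure Ω)]
    (X : Fin n → Ω → ℝ) (hX : ∀ i, Measurable (X i)) (hpos : ∀ i ω, 0 < X i ω)
    (hnoties : ∀ i j : Fin n, i ≠ j → ℙ {ω | X i ω = X j ω} = 0)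
    (q : (Fin n → Bool) → ℝ)
    (hq : ∀ x, q x =
      (ℙ {ω | ∀ i, x i = false → ∀ j, x j = true → X i ω < X j ω}).toReal)
    (PT : ((Fin n → Bool) → Bool) → ℕ → ℝ)
    (hPT : ∀ φ : (Fin n → Bool) → Bool, Semicoherent φ → ∀ k ∈ Finset.Icc 1 n,
      PT φ k =
        (∑ x ∈ Finset.univ.filter (fun x : Fin n → Bool => cntOnes x = n - k + 1),
          q x * (if φ x then (1 : ℝ) else 0)) -
        (∑ x ∈ Finset.univ.filter (fun x : Fin n → Bool => cntOnes x = n - k),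
          q x * (if φ x then (1 : ℝ) else 0))) :
    ((∀ φ : (Fin n → Bool) → Bool, Semicoherent φ → ∀ t : ℝ, 0 < t →
        (ℙ {ω | φ (fun i => decide (t < X i ω)) = true}).toReal =
          (∑ k ∈ Finset.Icc 1 n, PT φ k *
            (ℙ {ω | n + 1 - k ≤ (Finset.univ.filter fun i => t < X i ω).card}).toReal) ∧
        (ℙ {ω | φ (fun i => decide (t < X i ω)) = true}).toReal =
          ∑ k ∈ Finset.Icc 1 n, (phiAvg φ (n - k + 1) - phiAvg φ (n - k)) *
            (ℙ {ω | n + 1 - k ≤ (Finset.univ.filter fun i => t < X i ω).card}).toReal) ↔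
      ((∀ φ : (Fin n → Bool) → Bool, Semicoherent φ → ∀ k ∈ Finset.Icc 1 n,
          PT φ k = phiAvg φ (n - k + 1) - phiAvg φ (n - k)) ∧
        (∀ t : ℝ, 0 < t → ∀ x x' : Fin n → Bool, cntOnes x = cntOnes x' →
          ℙ {ω | (fun i => decide (t < X i ω)) = x} =
            ℙ {ω | (fun i => decide (t < X i ω)) = x'}))) ∧
    (((∀ φ : (Fin n → Bool) → Bool, Semicoherent φ → ∀ k ∈ Finset.Icc 1 n,
          PT φ k = phiAvg φ (n - k + 1) - phiAvg φ (n - k)) ∧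
        (∀ t : ℝ, 0 < t → ∀ x x' : Fin n → Bool, cntOnes x = cntOnes x' →
          ℙ {ω | (fun i => decide (t < X i ω)) = x} =
            ℙ {ω | (fun i => decide (t < X i ω)) = x'})) ↔
      ((∀ x : Fin n → Bool, q x = 1 / (n.choose (cntOnes x) : ℝ)) ∧
        (∀ t : ℝ, 0 < t → ∀ x x' : Fin n → Bool, cntOnes x = cntOnes x' →
          ℙ {ω | (fun i => decide (t < X i ω)) = x} =
            ℙ {ω | (fun i => decide (t < X i ω)) = x'}))) :=
  stmt_17_general n X hX hpos hnoties q hq PT hPT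
end

section
/- For the random vector (X_1, X_2, X_3) taking the eight values (1,2,4), (2,4,5), (3,1,2), (4,2,3), (5,3,4), (2,3,1), (3,4,2), (4,5,3) each with probability 1/8: the relative quality function satisfies q({1}) = q({2}) = q({1,2}) = q({1,3}) = 3/8 and q({3}) = q({2,3}) = 2/8 (so q is not symmetric), yet for every t > 0 the indicators χ_1(t), χ_2(t), χ_3(t) are exchangeable: Pr(χ(t) = x) = 1/8 if |x|=1 and t ∈ [2,5), Pr(χ(t)=x) = 1/8 if |x|=2 and t ∈ [1,4), and 0 otherwise (for |x| ∈ {1,2}). -/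
/-!
All lifetimes are integers between 1 and 5. Hence for `t ≥ 0` the state vector `χ(t)` coincides
with the state at the integer time `⌊t⌋₊`, and from time 5 on it no longer changes (every
component has failed). Every claim therefore reduces to counting among the eight outcomes at the
integer times `0, …, 5`.
-/

open MeasureTheory

noncomputable def unif8 : Measure (Fin 8) := (PMF.uniformOfFintype (Fin 8)).toMeasure

def exLife : Fin 8 → Fin 3 → ℝ :=
  ![![1, 2, 4], ![2, 4, 5], ![3, 1, 2], ![4, 2, 3],
    ![5, 3, 4], ![2, 3, 1], ![3, 4, 2], ![4, 5, 3]]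

/-- The relative quality function `q`; component `i : Fin 3` is the paper's component `i + 1`. -/
noncomputable def qEx (A : Finset (Fin 3)) : ℝ :=
  (unif8 {ω | ∀ i ∉ A, ∀ j ∈ A, exLife ω i < exLife ω j}).toReal

open Finset

theorem PMF.toMeasure_uniformOfFintype_setOf_toReal {α : Type*} [Fintype α] [Nonempty α]
    [MeasurableSpace α] [MeasurableSingletonClass α] (p : α → Prop) [DecidablePred p] :
    ((PMF.uniformOfFintype α).toMeasure {a | p a}).toReal = #{a | p a} / Fintype.card α := by
  rw [← Finset.coe_filter_univ, PMF.toMeasure_apply_finset]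
  simp [PMF.uniformOfFintype_apply, div_eq_mul_inv]

lemma unif8_setOf_toReal (p : Fin 8 → Prop) [DecidablePred p] :
    (unif8 {ω | p ω}).toReal = #{ω | p ω} / 8 := by
  simp only [unif8, PMF.toMeasure_uniformOfFintype_setOf_toReal, Fintype.card_fin,
    Nat.cast_ofNat]

/-- `exLife` with entries in `ℕ`, so that events about it are decidable. -/
def natLife : Fin 8 → Fin 3 → ℕ :=
  ![![1, 2, 4], ![2, 4, 5], ![3, 1, 2], ![4, 2, 3],
    ![5, 3, 4], ![2, 3, 1], ![3, 4, 2], ![4, 5, 3]]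

lemma exLife_eq_natCast (ω : Fin 8) (i : Fin 3) : exLife ω i = natLife ω i := by
  fin_cases ω <;> fin_cases i <;> norm_num [exLife, natLife]

lemma natLife_le_five (ω : Fin 8) (i : Fin 3) : natLife ω i ≤ 5 := by
  revert ω i; decide

lemma qEx_eq_of_card {A : Finset (Fin 3)} {n : ℕ}
    (h : #{ω | ∀ i ∉ A, ∀ j ∈ A, natLife ω i < natLife ω j} = n) : qEx A = n / 8 := by
  simp only [qEx, exLife_eq_natCast, Nat.cast_lt, unif8_setOf_toReal, h]

def stateAt (k : ℕ) (ω : Fin 8) : Fin 3 → Bool := fun i => decide (k < natLife ω i)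

lemma stateAt_min_five (k : ℕ) : stateAt (min k 5) = stateAt k := by
  funext ω i
  have := natLife_le_five ω i
  simp only [stateAt, decide_eq_decide]
  omega

lemma card_stateAt_of_le_five : ∀ k ≤ 5, ∀ x : Fin 3 → Bool,
    (#{i | x i = true} = 1 → #{ω | stateAt k ω = x} = if 2 ≤ k ∧ k < 5 then 1 else 0) ∧
    (#{i | x i = true} = 2 → #{ω | stateAt k ω = x} = if 1 ≤ k ∧ k < 4 then 1 else 0) := by
  decide

lemma card_stateAt (k : ℕ) (x : Fin 3 → Bool) :
    (#{i | x i = true} = 1 → #{ω | stateAt k ω = x} = if 2 ≤ k ∧ k < 5 then 1 else 0) ∧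
    (#{i | x i = true} = 2 → #{ω | stateAt k ω = x} = if 1 ≤ k ∧ k < 4 then 1 else 0) := by
  have h := card_stateAt_of_le_five (min k 5) (min_le_right k 5) x
  have h₁ : (2 ≤ min k 5 ∧ min k 5 < 5) ↔ (2 ≤ k ∧ k < 5) := by omega
  have h₂ : (1 ≤ min k 5 ∧ min k 5 < 4) ↔ (1 ≤ k ∧ k < 4) := by omega
  simpa only [stateAt_min_five, h₁, h₂] using h

lemma unif8_state_toReal_eq_card_stateAt_floor {t : ℝ} (ht : 0 ≤ t) (x : Fin 3 → Bool) :
    (unif8 {ω | (fun i => decide (t < exLife ω i)) = x}).toReal =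
      #{ω | stateAt ⌊t⌋₊ ω = x} / 8 := by
  simp only [exLife_eq_natCast, ← Nat.floor_lt ht, unif8_setOf_toReal]
  rfl

/-- In the example, `q({1}) = q({2}) = q({1,2}) = q({1,3}) = 3/8` and
`q({3}) = q({2,3}) = 2/8`, so `q` is not symmetric; yet the component states are
exchangeable at every time `t > 0`: `Pr(χ(t) = x) = 1/8` for `t ∈ [2,5)` (else `0`)
when `|x| = 1`, and `Pr(χ(t) = x) = 1/8` for `t ∈ [1,4)` (else `0`) when `|x| = 2`. -/
theorem stmt_18 :
    qEx {0} = 3 / 8 ∧ qEx {1} = 3 / 8 ∧ qEx {0, 1} = 3 / 8 ∧ qEx {0, 2} = 3 / 8 ∧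
    qEx {2} = 2 / 8 ∧ qEx {1, 2} = 2 / 8 ∧
    (∀ t : ℝ, 0 < t → ∀ x : Fin 3 → Bool,
      ((Finset.univ.filter fun i => x i = true).card = 1 →
        (unif8 {ω | (fun i => decide (t < exLife ω i)) = x}).toReal =
          if 2 ≤ t ∧ t < 5 then 1 / 8 else 0) ∧
      ((Finset.univ.filter fun i => x i = true).card = 2 →
        (unif8 {ω | (fun i => decide (t < exLife ω i)) = x}).toReal =
          if 1 ≤ t ∧ t < 4 then 1 / 8 else 0)) := by
  refine ⟨qEx_eq_of_card (n := 3) (by decide), qEx_eq_of_card (n := 3) (by decide),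
    qEx_eq_of_card (n := 3) (by decide), qEx_eq_of_card (n := 3) (by decide),
    qEx_eq_of_card (n := 2) (by decide), qEx_eq_of_card (n := 2) (by decide),
    fun t ht x => ?_⟩
  have h₁ : (2 ≤ t ∧ t < 5) ↔ (2 ≤ ⌊t⌋₊ ∧ ⌊t⌋₊ < 5) := by
    rw [Nat.le_floor_iff ht.le, Nat.floor_lt ht.le]; norm_num
  have h₂ : (1 ≤ t ∧ t < 4) ↔ (1 ≤ ⌊t⌋₊ ∧ ⌊t⌋₊ < 4) := by
    rw [Nat.le_floor_iff ht.le, Nat.floor_lt ht.le]; norm_num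
  obtain ⟨card₁, card₂⟩ := card_stateAt ⌊t⌋₊ x
  simp only [unif8_state_toReal_eq_card_stateAt_floor ht.le, h₁, h₂]
  refine ⟨fun hx => ?_, fun hx => ?_⟩
  · rw [card₁ hx]; split_ifs <;> norm_num
  · rw [card₂ hx]; split_ifs <;> norm_num
end
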